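/- The linear functional χ on 𝔤 defined by χ(x) = κ(e,x) vanishes on all brackets of elements of 𝔫_l: κ(e, ⁅x,y⁆) = 0 for all x, y ∈ 𝔫_l. -/

import Mathlib

open LieAlgebra

variable {L : Type*} [LieRing L] [LieAlgebra ℂ L]

/-- The eigenspace `𝔤ᵢ` of `ad h` with eigenvalue `i ∈ ℤ`. -/
noncomputable def gEig (h : L) (i : ℤ) : Submodule ℂ L :=
  Module.End.eigenspace ((ad ℂ L h)) (i : ℂ)

/-- `𝔤_{≤k}`, the sum of the eigenspaces `𝔤ᵢ` for `i ≤ k`. -/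
noncomputable def gLe (h : L) (k : ℤ) : Submodule ℂ L :=
  ⨆ i ∈ Set.Iic k, gEig h i

/-- `l^{⊥ω} = {y ∈ 𝔤₋₁ : ω(x, y) = 0 for all x ∈ l}`, where `ω(x, y) = κ(⁅x, y⁆, e)`. -/
noncomputable def lPerpOmega (e h : L) (l : Submodule ℂ L) : Submodule ℂ L :=
  gEig h (-1) ⊓
    ⨅ x ∈ l, LinearMap.ker (((killingForm ℂ L).flip e).comp (ad ℂ L x))

/-- `𝔫_l = l + 𝔤_{≤ -2}`. -/
noncomputable def nSub (h : L) (l : Submodule ℂ L) : Submodule ℂ L :=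
  l ⊔ gLe h (-2)

/-- `𝔪_l = l^{⊥ω} + 𝔤_{≤ -2}`. -/
noncomputable def mSub (e h : L) (l : Submodule ℂ L) : Submodule ℂ L :=
  lPerpOmega e h l ⊔ gLe h (-2)

/-!
Invariance of κ and `⁅h, e⁆ = 2e` make `χ = κ(e, ·)` vanish on every `𝔤ᵢ` with `i ≠ -2`.
Since `⁅𝔤_{≤a}, 𝔤_{≤b}⁆ ⊆ 𝔤_{≤a+b}`, a bracket of two elements of `𝔫_l` is a bracket in `l`,
killed by isotropy, plus a term of `𝔤_{≤-3}`.
-/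

open Submodule

section

variable {e h : L}

lemma lie_mem_gEig {i j : ℤ} {x y : L} (hx : x ∈ gEig h i) (hy : y ∈ gEig h j) :
    ⁅x, y⁆ ∈ gEig h (i + j) := by
  simp only [gEig, Module.End.mem_eigenspace_iff, ad_apply] at hx hy ⊢
  rw [leibniz_lie, hx, hy, smul_lie, lie_smul, Int.cast_add, add_smul]

lemma gEig_le_gLe {i k : ℤ} (hik : i ≤ k) : gEig h i ≤ gLe h k :=
  le_biSup (gEig h) (Set.mem_Iic.mpr hik)

lemma gLe_mono {a b : ℤ} (hab : a ≤ b) : gLe h a ≤ gLe h b :=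
  iSup₂_le fun _ hi => gEig_le_gLe ((Set.mem_Iic.mp hi).trans hab)

lemma map₂_lie_gLe_le (a b : ℤ) :
    map₂ (LinearMap.mk₂ ℂ (fun x y : L ↦ ⁅x, y⁆) add_lie smul_lie lie_add lie_smul)
      (gLe h a) (gLe h b) ≤ gLe h (a + b) := by
  simp only [gLe, map₂_iSup_left, map₂_iSup_right]
  refine iSup₂_le fun j hj => iSup₂_le fun i hi => map₂_le.mpr fun x hx y hy => ?_
  exact gEig_le_gLe (add_le_add (Set.mem_Iic.mp hi) (Set.mem_Iic.mp hj)) (lie_mem_gEig hx hy)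

lemma lie_mem_gLe {a b : ℤ} {x y : L} (hx : x ∈ gLe h a) (hy : y ∈ gLe h b) :
    ⁅x, y⁆ ∈ gLe h (a + b) :=
  map₂_lie_gLe_le a b (apply_mem_map₂ _ hx hy)

lemma nSub_le_gLe {l : Submodule ℂ L} (hl : l ≤ gEig h (-1)) : nSub h l ≤ gLe h (-1) :=
  sup_le (hl.trans (gEig_le_gLe le_rfl)) (gLe_mono (by norm_num))

/-- Invariance gives `(2 + i) κ(e, z) = κ(⁅h, e⁆, z) + κ(e, ⁅h, z⁆) = 0`. -/
lemma killingForm_eq_zero_of_mem_gEig (hhe : ⁅h, e⁆ = (2 : ℂ) • e) {i : ℤ} (hi : i ≠ -2)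
    {z : L} (hz : z ∈ gEig h i) : killingForm ℂ L e z = 0 := by
  rw [gEig, Module.End.mem_eigenspace_iff, ad_apply] at hz
  have hinv := LieModule.traceForm_apply_lie_apply' ℂ L L h e z
  rw [hhe, hz, map_smul, map_smul, LinearMap.smul_apply, smul_eq_mul, smul_eq_mul] at hinv
  have hi' : (2 + i : ℂ) ≠ 0 := by exact_mod_cast (show 2 + i ≠ 0 by omega)
  exact (mul_eq_zero.mp (by linear_combination hinv : (2 + i : ℂ) * _ = 0)).resolve_left hi'

lemma killingForm_eq_zero_of_mem_gLe (hhe : ⁅h, e⁆ = (2 : ℂ) • e) {k : ℤ} (hk : k < -2)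
    {z : L} (hz : z ∈ gLe h k) : killingForm ℂ L e z = 0 := by
  have : gLe h k ≤ LinearMap.ker (killingForm ℂ L e) :=
    iSup₂_le fun i hi w hw => killingForm_eq_zero_of_mem_gEig hhe
      (by have := Set.mem_Iic.mp hi; omega) hw
  exact this hz

end

theorem stmt4_general {L : Type*} [LieRing L] [LieAlgebra ℂ L]
    (e h : L)
    (hhe : ⁅h, e⁆ = (2 : ℂ) • e)
    (l : Submodule ℂ L) (hl : l ≤ gEig h (-1))
    (hiso : ∀ x ∈ l, ∀ y ∈ l, killingForm ℂ L ⁅x, y⁆ e = 0) :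
    ∀ x ∈ nSub h l, ∀ y ∈ nSub h l, killingForm ℂ L e ⁅x, y⁆ = 0 := by
  intro x hx y hy
  obtain ⟨a, ha, b, hb, rfl⟩ := mem_sup.mp hx
  obtain ⟨c, hc, d, hd, rfl⟩ := mem_sup.mp hy
  have hac : killingForm ℂ L e ⁅a, c⁆ = 0 := by
    rw [LieModule.traceForm_comm]; exact hiso a ha c hc
  have had : killingForm ℂ L e ⁅a, d⁆ = 0 :=
    killingForm_eq_zero_of_mem_gLe hhe (by norm_num) (lie_mem_gLe (gEig_le_gLe le_rfl (hl ha)) hd)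
  have hby : killingForm ℂ L e ⁅b, c + d⁆ = 0 :=
    killingForm_eq_zero_of_mem_gLe hhe (by norm_num) (lie_mem_gLe hb (nSub_le_gLe hl hy))
  rw [add_lie, lie_add, map_add, map_add, hac, had, hby, add_zero, add_zero]

/-- The functional `χ(x) = κ(e, x)` vanishes on all brackets of
elements of `𝔫_l`. -/
theorem stmt4 {L : Type*} [LieRing L] [LieAlgebra ℂ L]
    [Module.Finite ℂ L] [LieAlgebra.IsSemisimple ℂ L]
    (e h f : L) (he : e ≠ 0)
    (hhe : ⁅h, e⁆ = (2 : ℂ) • e) (hhf : ⁅h, f⁆ = (-2 : ℂ) • f) (hef : ⁅e, f⁆ = h)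
    (l : Submodule ℂ L) (hl : l ≤ gEig h (-1))
    (hiso : ∀ x ∈ l, ∀ y ∈ l, killingForm ℂ L ⁅x, y⁆ e = 0) :
    ∀ x ∈ nSub h l, ∀ y ∈ nSub h l, killingForm ℂ L e ⁅x, y⁆ = 0 :=
  stmt4_general e h hhe l hl hiso
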